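/- arXiv:2511.22542 — 6 statements merged into one kernel-verified Lean document; each statement's English description precedes it below -/
import Mathlib

section
/- For α ∈ (0, 1/2) and 0 ≤ r < s, the integral ∫₀^s |r - τ|^(-α) (s - τ)^(-α) dτ is at most C · (s - r)^(1-2α) + (1/(1-2α)) · s^(1-2α), where C = π + 2/(1-2α). -/
/-!
With `x = |r - τ| ^ (-α)` and `y = (s - τ) ^ (-α)`, the bound `x y ≤ (x² + y²) / 2` dominates
the kernel by `(|r - τ| ^ (-2α) + (s - τ) ^ (-2α)) / 2`, whose integral over `[0, s]` is
`(r ^ (1-2α) + (s - r) ^ (1-2α) + s ^ (1-2α)) / (2 (1 - 2α))`. As `r ^ (1-2α) ≤ s ^ (1-2α)`, this is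
at most `(s - r) ^ (1-2α) / (2 (1 - 2α)) + s ^ (1-2α) / (1 - 2α)`.
-/

open MeasureTheory Real Set

lemma rpow_mul_rpow_le_half_add {x y : ℝ} (hx : 0 ≤ x) (hy : 0 ≤ y) (p : ℝ) :
    x ^ p * y ^ p ≤ (x ^ (2 * p) + y ^ (2 * p)) / 2 := by
  have hsq : ∀ z : ℝ, 0 ≤ z → z ^ (2 * p) = (z ^ p) ^ 2 := fun z hz => by
    rw [mul_comm, rpow_mul hz, rpow_two]
  rw [hsq x hx, hsq y hy]
  linarith [two_mul_le_add_sq (x ^ p) (y ^ p)]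

section IntegralRpow

variable {p : ℝ}

lemma intervalIntegrable_const_sub_rpow (hp : -1 < p) (c a b : ℝ) :
    IntervalIntegrable (fun τ => (c - τ) ^ p) volume a b := by
  simpa using (intervalIntegral.intervalIntegrable_rpow' hp
    (a := c - a) (b := c - b)).comp_sub_left c

lemma intervalIntegrable_sub_const_rpow (hp : -1 < p) (c a b : ℝ) :
    IntervalIntegrable (fun τ => (τ - c) ^ p) volume a b := by
  simpa using (intervalIntegral.intervalIntegrable_rpow' hp
    (a := a - c) (b := b - c)).comp_sub_right c

lemma integral_const_sub_rpow (hp : -1 < p) (c a b : ℝ) :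
    ∫ τ in a..b, (c - τ) ^ p = ((c - a) ^ (p + 1) - (c - b) ^ (p + 1)) / (p + 1) := by
  rw [intervalIntegral.integral_comp_sub_left (fun x => x ^ p), integral_rpow (Or.inl hp)]

lemma integral_sub_const_rpow (hp : -1 < p) (c a b : ℝ) :
    ∫ τ in a..b, (τ - c) ^ p = ((b - c) ^ (p + 1) - (a - c) ^ (p + 1)) / (p + 1) := by
  rw [intervalIntegral.integral_comp_sub_right (fun x => x ^ p), integral_rpow (Or.inl hp)]

variable {a b c : ℝ}

lemma abs_sub_rpow_eqOn_of_le (hac : a ≤ c) :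
    EqOn (fun τ => |c - τ| ^ p) (fun τ => (c - τ) ^ p) (uIcc a c) := by
  intro τ hτ
  rw [uIcc_of_le hac] at hτ
  simp only [abs_of_nonneg (sub_nonneg.2 hτ.2)]

lemma abs_sub_rpow_eqOn_of_ge (hcb : c ≤ b) :
    EqOn (fun τ => |c - τ| ^ p) (fun τ => (τ - c) ^ p) (uIcc c b) := by
  intro τ hτ
  rw [uIcc_of_le hcb] at hτ
  simp only [abs_sub_comm c, abs_of_nonneg (sub_nonneg.2 hτ.1)]

lemma intervalIntegrable_abs_sub_rpow (hp : -1 < p) (hac : a ≤ c) (hcb : c ≤ b) :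
    IntervalIntegrable (fun τ => |c - τ| ^ p) volume a b :=
  ((intervalIntegrable_const_sub_rpow hp c a c).congr
      ((abs_sub_rpow_eqOn_of_le hac).symm.mono uIoc_subset_uIcc)).trans
    ((intervalIntegrable_sub_const_rpow hp c c b).congr
      ((abs_sub_rpow_eqOn_of_ge hcb).symm.mono uIoc_subset_uIcc))

lemma integral_abs_sub_rpow (hp : -1 < p) (hac : a ≤ c) (hcb : c ≤ b) :
    ∫ τ in a..b, |c - τ| ^ p = ((c - a) ^ (p + 1) + (b - c) ^ (p + 1)) / (p + 1) := by
  have hp1 : p + 1 ≠ 0 := by linarith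
  rw [← intervalIntegral.integral_add_adjacent_intervals
      (intervalIntegrable_abs_sub_rpow hp hac le_rfl)
      (intervalIntegrable_abs_sub_rpow hp le_rfl hcb),
    intervalIntegral.integral_congr (abs_sub_rpow_eqOn_of_le hac),
    intervalIntegral.integral_congr (abs_sub_rpow_eqOn_of_ge hcb),
    integral_const_sub_rpow hp, integral_sub_const_rpow hp]
  simp only [sub_self, zero_rpow hp1]
  ring

lemma integral_abs_sub_rpow_mul_sub_rpow_le {r s : ℝ} (hp : -1 < 2 * p) (har : a ≤ r)
    (hrs : r ≤ s) :
    ∫ τ in a..s, |r - τ| ^ p * (s - τ) ^ p ≤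
      ((r - a) ^ (2 * p + 1) + (s - r) ^ (2 * p + 1) + (s - a) ^ (2 * p + 1))
        / (2 * (2 * p + 1)) := by
  have has : a ≤ s := har.trans hrs
  have hdom_int :
      IntervalIntegrable (fun τ => |r - τ| ^ (2 * p) + (s - τ) ^ (2 * p)) volume a s :=
    (intervalIntegrable_abs_sub_rpow hp har hrs).add (intervalIntegrable_const_sub_rpow hp s a s)
  calc ∫ τ in a..s, |r - τ| ^ p * (s - τ) ^ p
      ≤ ∫ τ in a..s, (|r - τ| ^ (2 * p) + (s - τ) ^ (2 * p)) / 2 := by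
        rw [intervalIntegral.integral_of_le has, intervalIntegral.integral_of_le has]
        refine setIntegral_mono_of_nonneg (fun τ hτ => ?_) (fun τ hτ => ?_)
          ((intervalIntegrable_iff_integrableOn_Ioc_of_le has).1 (hdom_int.div_const 2))
        · have : 0 ≤ s - τ := sub_nonneg.2 hτ.2
          positivity
        · exact rpow_mul_rpow_le_half_add (abs_nonneg _) (sub_nonneg.2 hτ.2) p
    _ = _ := by
        rw [intervalIntegral.integral_div, intervalIntegral.integral_add
            (intervalIntegrable_abs_sub_rpow hp har hrs)
            (intervalIntegrable_const_sub_rpow hp s a s),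
          integral_abs_sub_rpow hp har hrs, integral_const_sub_rpow hp, sub_self,
          zero_rpow (by linarith), sub_zero]
        field_simp

end IntegralRpow

theorem stmt_0 (α r s : ℝ) (hα : α ∈ Set.Ioo (0:ℝ) (1/2))
    (hr : 0 ≤ r) (hrs : r < s) :
    ∫ τ in (0:ℝ)..s, |r - τ| ^ (-α) * (s - τ) ^ (-α) ≤
      (Real.pi + 2 / (1 - 2*α)) * (s - r) ^ (1 - 2*α)
        + (1 / (1 - 2*α)) * s ^ (1 - 2*α) := by
  obtain ⟨hα0, hα2⟩ := hα
  have hbound := integral_abs_sub_rpow_mul_sub_rpow_le (p := -α) (by linarith) hr hrs.le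
  rw [show 2 * -α + 1 = 1 - 2 * α by ring, sub_zero, sub_zero] at hbound
  set q := 1 - 2 * α
  have hq : 0 < q := by linarith
  have hrs_pow : r ^ q ≤ s ^ q := rpow_le_rpow hr hrs.le hq.le
  have hsr_pow : 0 ≤ (s - r) ^ q := rpow_nonneg (sub_nonneg.2 hrs.le) _
  have hgap : (π + 2 / q) * (s - r) ^ q + 1 / q * s ^ q - (r ^ q + (s - r) ^ q + s ^ q) / (2 * q)
      = π * (s - r) ^ q + (3 * (s - r) ^ q + (s ^ q - r ^ q)) / (2 * q) := by
    field_simp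
    ring
  refine hbound.trans (sub_nonneg.1 ?_)
  rw [hgap]
  exact add_nonneg (mul_nonneg pi_pos.le hsr_pow) (div_nonneg (by linarith) (by linarith))
end

section
/- For α ∈ (0, 1/2) and real numbers 0 ≤ s < t, one has ∫₀^s ((s-τ)^(-α) - (t-τ)^(-α)) (t-τ)^(-α) dτ ≤ (t-s)^(1-2α) · ∫₀^∞ (v^(-α) - (v+1)^(-α)) (v+1)^(-α) dv, and the latter integral is finite and at most 1/(1-2α). -/
/-!
Put `c = t - s`. Reflecting `τ ↦ s - τ` and rescaling by `c` turns the left-hand side into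
`c ^ (1 - 2α) * ∫₀^{s/c} K`, where `K v = (v^(-α) - (v+1)^(-α)) (v+1)^(-α) ≥ 0` (`crossKernel`),
so it is at most `c ^ (1 - 2α) * ∫₀^∞ K`. Since `(v+1)^(-α) ≤ v^(-α)`, we have
`K v ≤ v^(-2α) - (v+1)^(-2α)`, whose integral over `(0, ∞)` is `1 / (1 - 2α)`: an antiderivative
is `(v^β - (v+1)^β) / β` with `β = 1 - 2α`, which equals `-1/β` at `0` and tends to `0` at
infinity.
-/

open MeasureTheory Real Set Filter Topology

namespace MixedFBM

lemma rpow_add_one_le_rpow_add_rpow_sub_one {β v : ℝ} (hβ : β ≤ 1) (hv : 0 < v) :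
    (v + 1) ^ β ≤ v ^ β + v ^ (β - 1) := by
  have hbase : 1 ≤ 1 + 1 / v := le_add_of_nonneg_right (by positivity)
  calc (v + 1) ^ β = v ^ β * (1 + 1 / v) ^ β := by
        rw [← mul_rpow hv.le (by positivity), mul_add, mul_one_div_cancel hv.ne', mul_one]
    _ ≤ v ^ β * (1 + 1 / v) := by
        gcongr
        simpa using rpow_le_rpow_of_exponent_le hbase hβ
    _ = v ^ β + v ^ (β - 1) := by rw [rpow_sub_one hv.ne']; ring

lemma tendsto_rpow_sub_rpow_add_one_atTop {β : ℝ} (hβ0 : 0 ≤ β) (hβ1 : β < 1) :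
    Tendsto (fun v : ℝ => v ^ β - (v + 1) ^ β) atTop (𝓝 0) := by
  have hlower : Tendsto (fun v : ℝ => -v ^ (β - 1)) atTop (𝓝 0) := by
    simpa [neg_sub] using (tendsto_rpow_neg_atTop (sub_pos.2 hβ1)).neg
  refine tendsto_of_tendsto_of_tendsto_of_le_of_le' hlower tendsto_const_nhds ?_ ?_
  · filter_upwards [eventually_gt_atTop 0] with v hv
    linarith [rpow_add_one_le_rpow_add_rpow_sub_one hβ1.le hv]
  · filter_upwards [eventually_ge_atTop 0] with v hv
    exact sub_nonpos.2 (rpow_le_rpow hv (by linarith) hβ0)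

lemma rpow_neg_sub_rpow_neg_add_one_nonneg {γ v : ℝ} (hγ : 0 ≤ γ) (hv : 0 < v) :
    0 ≤ v ^ (-γ) - (v + 1) ^ (-γ) :=
  sub_nonneg.2 (rpow_le_rpow_of_nonpos hv (by linarith) (by linarith))

lemma hasDerivAt_rpow_sub_rpow_add_one_div {γ v : ℝ} (hγ : γ ≠ 1) (hv : 0 < v) :
    HasDerivAt (fun v : ℝ => (v ^ (1 - γ) - (v + 1) ^ (1 - γ)) / (1 - γ))
      (v ^ (-γ) - (v + 1) ^ (-γ)) v := by
  have hβ : 1 - γ ≠ 0 := sub_ne_zero.2 hγ.symm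
  have h := ((hasDerivAt_rpow_const (p := 1 - γ) (Or.inl hv.ne')).sub
    (((hasDerivAt_id v).add_const 1).rpow_const (p := 1 - γ) (Or.inl (by positivity)))).div_const
      (1 - γ)
  refine h.congr_deriv ?_
  rw [show 1 - γ - 1 = -γ by ring]
  field_simp
  rfl

variable {γ : ℝ}

lemma continuousAt_rpow_sub_rpow_add_one_div_zero (hγ : γ < 1) :
    ContinuousAt (fun v : ℝ => (v ^ (1 - γ) - (v + 1) ^ (1 - γ)) / (1 - γ)) 0 := by
  fun_prop (disch := simp; linarith)

lemma tendsto_rpow_sub_rpow_add_one_div_atTop (hγ0 : 0 < γ) (hγ1 : γ < 1) :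
    Tendsto (fun v : ℝ => (v ^ (1 - γ) - (v + 1) ^ (1 - γ)) / (1 - γ)) atTop (𝓝 0) := by
  simpa using (tendsto_rpow_sub_rpow_add_one_atTop (by linarith) (by linarith)).div_const (1 - γ)

lemma integrableOn_rpow_neg_sub_rpow_neg_add_one (hγ0 : 0 < γ) (hγ1 : γ < 1) :
    IntegrableOn (fun v : ℝ => v ^ (-γ) - (v + 1) ^ (-γ)) (Ioi 0) :=
  integrableOn_Ioi_deriv_of_nonneg
    (continuousAt_rpow_sub_rpow_add_one_div_zero hγ1).continuousWithinAt
    (fun _ hv => hasDerivAt_rpow_sub_rpow_add_one_div hγ1.ne hv)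
    (fun _ hv => rpow_neg_sub_rpow_neg_add_one_nonneg hγ0.le hv)
    (tendsto_rpow_sub_rpow_add_one_div_atTop hγ0 hγ1)

lemma integral_rpow_neg_sub_rpow_neg_add_one (hγ0 : 0 < γ) (hγ1 : γ < 1) :
    ∫ v in Ioi (0 : ℝ), v ^ (-γ) - (v + 1) ^ (-γ) = 1 / (1 - γ) := by
  rw [integral_Ioi_of_hasDerivAt_of_tendsto
    (continuousAt_rpow_sub_rpow_add_one_div_zero hγ1).continuousWithinAt
    (fun _ hv => hasDerivAt_rpow_sub_rpow_add_one_div hγ1.ne hv)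
    (integrableOn_rpow_neg_sub_rpow_neg_add_one hγ0 hγ1)
    (tendsto_rpow_sub_rpow_add_one_div_atTop hγ0 hγ1)]
  simp [zero_rpow (sub_pos.2 hγ1).ne', neg_div]

noncomputable def crossKernel (α v : ℝ) : ℝ := (v ^ (-α) - (v + 1) ^ (-α)) * (v + 1) ^ (-α)

variable {α : ℝ}

lemma crossKernel_nonneg (hα : 0 ≤ α) {v : ℝ} (hv : 0 < v) : 0 ≤ crossKernel α v :=
  mul_nonneg (rpow_neg_sub_rpow_neg_add_one_nonneg hα hv) (by positivity)

lemma crossKernel_le (hα : 0 ≤ α) {v : ℝ} (hv : 0 < v) :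
    crossKernel α v ≤ v ^ (-(2 * α)) - (v + 1) ^ (-(2 * α)) := by
  have hsq : ∀ x : ℝ, 0 < x → x ^ (-(2 * α)) = x ^ (-α) * x ^ (-α) := fun x hx => by
    rw [← rpow_add hx]; ring_nf
  have hmono : (v + 1) ^ (-α) ≤ v ^ (-α) :=
    sub_nonneg.1 (rpow_neg_sub_rpow_neg_add_one_nonneg hα hv)
  rw [crossKernel, hsq v hv, hsq (v + 1) (by positivity)]
  nlinarith [rpow_nonneg hv.le (-α)]

lemma continuousOn_crossKernel : ContinuousOn (crossKernel α) (Ioi 0) := by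
  intro v (hv : 0 < v)
  refine ContinuousAt.continuousWithinAt ?_
  unfold crossKernel
  fun_prop (disch := exact Or.inl (by positivity))

lemma integrableOn_crossKernel (hα0 : 0 < α) (hα1 : α < 1 / 2) :
    IntegrableOn (crossKernel α) (Ioi 0) := by
  refine (integrableOn_rpow_neg_sub_rpow_neg_add_one (γ := 2 * α) (by linarith) (by linarith)).mono'
    (continuousOn_crossKernel.aestronglyMeasurable measurableSet_Ioi) ?_
  filter_upwards [self_mem_ae_restrict measurableSet_Ioi] with v hv
  rw [norm_of_nonneg (crossKernel_nonneg hα0.le hv)]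
  exact crossKernel_le hα0.le hv

lemma integral_crossKernel_le (hα0 : 0 < α) (hα1 : α < 1 / 2) :
    ∫ v in Ioi (0 : ℝ), crossKernel α v ≤ 1 / (1 - 2 * α) := by
  rw [← integral_rpow_neg_sub_rpow_neg_add_one (γ := 2 * α) (by linarith) (by linarith)]
  exact setIntegral_mono_on (integrableOn_crossKernel hα0 hα1)
    (integrableOn_rpow_neg_sub_rpow_neg_add_one (by linarith) (by linarith)) measurableSet_Ioi
    fun v hv => crossKernel_le hα0.le hv

lemma intervalIntegral_crossKernel_le_integral_Ioi (hα0 : 0 < α) (hα1 : α < 1 / 2) {b : ℝ}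
    (hb : 0 ≤ b) : ∫ v in (0 : ℝ)..b, crossKernel α v ≤ ∫ v in Ioi (0 : ℝ), crossKernel α v := by
  rw [intervalIntegral.integral_of_le hb]
  exact setIntegral_mono_set (integrableOn_crossKernel hα0 hα1)
    (ae_restrict_of_forall_mem measurableSet_Ioi fun v hv => crossKernel_nonneg hα0.le hv)
    Ioc_subset_Ioi_self.eventuallyLE

variable {c : ℝ}

lemma rpow_neg_sub_rpow_neg_add_mul_rpow_neg (hc : 0 < c) {u : ℝ} (hu : 0 ≤ u) :
    (u ^ (-α) - (u + c) ^ (-α)) * (u + c) ^ (-α) = c ^ (-(2 * α)) * crossKernel α (u / c) := by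
  obtain ⟨w, rfl⟩ : ∃ w, u = c * w := ⟨u / c, by field_simp⟩
  have hw : 0 ≤ w := nonneg_of_mul_nonneg_right hu hc
  rw [mul_div_cancel_left₀ _ hc.ne', crossKernel, show c * w + c = c * (w + 1) by ring,
    mul_rpow hc.le hw, mul_rpow hc.le (by positivity), show -(2 * α) = -α + -α by ring,
    rpow_add hc]
  ring

lemma intervalIntegral_rpow_neg_sub_rpow_neg_add_mul_rpow_neg (hc : 0 < c) {s : ℝ} (hs : 0 ≤ s) :
    ∫ u in (0 : ℝ)..s, (u ^ (-α) - (u + c) ^ (-α)) * (u + c) ^ (-α) =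
      c ^ (1 - 2 * α) * ∫ v in (0 : ℝ)..s / c, crossKernel α v := by
  rw [intervalIntegral.integral_congr (g := fun u => c ^ (-(2 * α)) * crossKernel α (u / c))
      fun u hu => rpow_neg_sub_rpow_neg_add_mul_rpow_neg hc (uIcc_of_le hs ▸ hu).1,
    intervalIntegral.integral_const_mul, intervalIntegral.integral_comp_div _ hc.ne', zero_div,
    smul_eq_mul, ← mul_assoc, show 1 - 2 * α = -(2 * α) + 1 by ring, rpow_add_one hc.ne']

end MixedFBM

open MixedFBM

theorem stmt_5 (α s t : ℝ) (hα : α ∈ Set.Ioo (0:ℝ) (1/2))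
    (hs : 0 ≤ s) (hst : s < t) :
    (∫ τ in (0:ℝ)..s, ((s - τ) ^ (-α) - (t - τ) ^ (-α)) * (t - τ) ^ (-α)) ≤
      (t - s) ^ (1 - 2*α) *
        (∫ v in Set.Ioi (0:ℝ), (v ^ (-α) - (v + 1) ^ (-α)) * (v + 1) ^ (-α)) ∧
    IntegrableOn (fun v : ℝ => (v ^ (-α) - (v + 1) ^ (-α)) * (v + 1) ^ (-α))
      (Set.Ioi (0:ℝ)) ∧
    (∫ v in Set.Ioi (0:ℝ), (v ^ (-α) - (v + 1) ^ (-α)) * (v + 1) ^ (-α)) ≤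
      1 / (1 - 2*α) := by
  obtain ⟨hα0, hα1⟩ := hα
  have hc : 0 < t - s := sub_pos.2 hst
  have hreflect : ∫ τ in (0 : ℝ)..s, ((s - τ) ^ (-α) - (t - τ) ^ (-α)) * (t - τ) ^ (-α) =
      ∫ u in (0 : ℝ)..s, (u ^ (-α) - (u + (t - s)) ^ (-α)) * (u + (t - s)) ^ (-α) := by
    simpa [sub_add_sub_cancel'] using intervalIntegral.integral_comp_sub_left (a := 0) (b := s)
      (fun u => (u ^ (-α) - (u + (t - s)) ^ (-α)) * (u + (t - s)) ^ (-α)) s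
  refine ⟨?_, integrableOn_crossKernel hα0 hα1, integral_crossKernel_le hα0 hα1⟩
  rw [hreflect, intervalIntegral_rpow_neg_sub_rpow_neg_add_mul_rpow_neg hc hs]
  exact mul_le_mul_of_nonneg_left
    (intervalIntegral_crossKernel_le_integral_Ioi hα0 hα1 (by positivity)) (by positivity)
end

section
/- For α ∈ (0, 1/2), B ≥ 2, the integral ∫₁^∞ (τ-1)^(-α) (τ^(-α) - (τ + 1/B)^(-α)) dτ is at most (1/(1-α)) · B^(-1). -/
/-!
Since `t ↦ t ^ (-α)` is convex with derivative `-α t ^ (-α - 1)`, the increment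
`τ ^ (-α) - (τ + 1/B) ^ (-α)` is at most `α B⁻¹ τ ^ (-α - 1)`. It remains to bound
`∫₁^∞ (τ - 1) ^ (-α) τ ^ (-α - 1) dτ` by `1 / (1 - α) + 1 / α`: on `(1, 2]` drop the factor
`τ ^ (-α - 1) ≤ 1`, on `(2, ∞)` drop the factor `(τ - 1) ^ (-α) ≤ 1`.
-/

open MeasureTheory Real Set

theorem one_sub_one_add_rpow_neg_le_mul {α x : ℝ} (hα : 0 ≤ α) (hx : -1 < x) :
    1 - (1 + x) ^ (-α) ≤ α * x := by
  have hpos : 0 < 1 + x := by linarith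
  have hlog : log (1 + x) ≤ x := by linarith [log_le_sub_one_of_pos hpos]
  have hexp := add_one_le_exp (log (1 + x) * -α)
  rw [rpow_def_of_pos hpos]
  nlinarith

theorem rpow_neg_sub_rpow_neg_add_le {α τ c : ℝ} (hα : 0 ≤ α) (hτ : 0 < τ) (hτc : 0 < τ + c) :
    τ ^ (-α) - (τ + c) ^ (-α) ≤ α * c * τ ^ (-α - 1) := by
  have hx : -1 < c / τ := by rw [lt_div_iff₀ hτ]; linarith
  have hsplit : (τ + c) ^ (-α) = τ ^ (-α) * (1 + c / τ) ^ (-α) := by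
    rw [← mul_rpow hτ.le (by linarith)]
    field_simp
  calc τ ^ (-α) - (τ + c) ^ (-α) = τ ^ (-α) * (1 - (1 + c / τ) ^ (-α)) := by rw [hsplit]; ring
    _ ≤ τ ^ (-α) * (α * (c / τ)) :=
      mul_le_mul_of_nonneg_left (one_sub_one_add_rpow_neg_le_mul hα hx) (rpow_nonneg hτ.le _)
    _ = α * c * τ ^ (-α - 1) := by rw [rpow_sub_one hτ.ne']; ring

section

variable {α : ℝ}

theorem sub_one_rpow_mul_rpow_le_sub_one_rpow (hα : 0 ≤ α) {τ : ℝ} (hτ : 1 ≤ τ) :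
    (τ - 1) ^ (-α) * τ ^ (-α - 1) ≤ (τ - 1) ^ (-α) :=
  mul_le_of_le_one_right (rpow_nonneg (sub_nonneg.2 hτ) _)
    (rpow_le_one_of_one_le_of_nonpos hτ (by linarith))

theorem sub_one_rpow_mul_rpow_le_rpow (hα : 0 ≤ α) {τ : ℝ} (hτ : 2 ≤ τ) :
    (τ - 1) ^ (-α) * τ ^ (-α - 1) ≤ τ ^ (-α - 1) :=
  mul_le_of_le_one_left (rpow_nonneg (by linarith) _)
    (rpow_le_one_of_one_le_of_nonpos (by linarith) (by linarith))

theorem integral_one_two_sub_one_rpow (hα : α < 1) :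
    ∫ τ in (1 : ℝ)..2, (τ - 1) ^ (-α) = 1 / (1 - α) := by
  rw [intervalIntegral.integral_comp_sub_right (· ^ (-α)), integral_rpow (by left; linarith)]
  norm_num [zero_rpow (by linarith : -α + 1 ≠ 0)]
  ring

theorem integrableOn_Ioc_one_two_sub_one_rpow (hα : α < 1) :
    IntegrableOn (fun τ : ℝ => (τ - 1) ^ (-α)) (Ioc 1 2) := by
  rw [← intervalIntegrable_iff_integrableOn_Ioc_of_le one_le_two]
  simpa [one_add_one_eq_two] using
    (intervalIntegral.intervalIntegrable_rpow' (a := 0) (b := 1) (by linarith : -1 < -α)).comp_sub_right 1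

theorem integral_Ioi_two_rpow_le (hα : 0 < α) : ∫ τ in Ioi (2 : ℝ), τ ^ (-α - 1) ≤ 1 / α := by
  rw [integral_Ioi_rpow_of_lt (by linarith) two_pos, sub_add_cancel, neg_div, div_neg, neg_neg]
  exact div_le_div_of_nonneg_right (rpow_le_one_of_one_le_of_nonpos one_le_two (by linarith)) hα.le

theorem integrableOn_Ioi_one_sub_one_rpow_mul_rpow (hα0 : 0 < α) (hα1 : α < 1) :
    IntegrableOn (fun τ : ℝ => (τ - 1) ^ (-α) * τ ^ (-α - 1)) (Ioi 1) := by
  have hmeas : AEStronglyMeasurable (fun τ : ℝ => (τ - 1) ^ (-α) * τ ^ (-α - 1)) :=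
    (by fun_prop : Measurable fun τ : ℝ => (τ - 1) ^ (-α) * τ ^ (-α - 1)).aestronglyMeasurable
  have hnonneg {τ : ℝ} (hτ : 1 ≤ τ) : 0 ≤ (τ - 1) ^ (-α) * τ ^ (-α - 1) :=
    mul_nonneg (rpow_nonneg (sub_nonneg.2 hτ) _) (rpow_nonneg (by linarith) _)
  rw [← Ioc_union_Ioi_eq_Ioi one_le_two]
  refine .union ((integrableOn_Ioc_one_two_sub_one_rpow hα1).mono' hmeas.restrict ?_)
    ((integrableOn_Ioi_rpow_of_lt (by linarith : -α - 1 < -1) two_pos).mono' hmeas.restrict ?_)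
  · refine (ae_restrict_iff' measurableSet_Ioc).2 (.of_forall fun τ hτ => ?_)
    rw [norm_of_nonneg (hnonneg hτ.1.le)]
    exact sub_one_rpow_mul_rpow_le_sub_one_rpow hα0.le hτ.1.le
  · refine (ae_restrict_iff' measurableSet_Ioi).2 (.of_forall fun τ (hτ : 2 < τ) => ?_)
    rw [norm_of_nonneg (hnonneg (by linarith))]
    exact sub_one_rpow_mul_rpow_le_rpow hα0.le hτ.le

theorem integral_Ioi_one_sub_one_rpow_mul_rpow_le (hα0 : 0 < α) (hα1 : α < 1) :
    ∫ τ in Ioi (1 : ℝ), (τ - 1) ^ (-α) * τ ^ (-α - 1) ≤ 1 / (1 - α) + 1 / α := by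
  have hint := integrableOn_Ioi_one_sub_one_rpow_mul_rpow hα0 hα1
  rw [← Ioc_union_Ioi_eq_Ioi one_le_two, setIntegral_union (Ioc_disjoint_Ioi le_rfl)
    measurableSet_Ioi (hint.mono_set Ioc_subset_Ioi_self) (hint.mono_set (Ioi_subset_Ioi one_le_two))]
  gcongr
  · calc ∫ τ in Ioc (1 : ℝ) 2, (τ - 1) ^ (-α) * τ ^ (-α - 1)
        ≤ ∫ τ in Ioc (1 : ℝ) 2, (τ - 1) ^ (-α) :=
          setIntegral_mono_on (hint.mono_set Ioc_subset_Ioi_self)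
            (integrableOn_Ioc_one_two_sub_one_rpow hα1) measurableSet_Ioc
            fun τ hτ => sub_one_rpow_mul_rpow_le_sub_one_rpow hα0.le hτ.1.le
      _ = 1 / (1 - α) := by
          rw [← intervalIntegral.integral_of_le one_le_two, integral_one_two_sub_one_rpow hα1]
  · calc ∫ τ in Ioi (2 : ℝ), (τ - 1) ^ (-α) * τ ^ (-α - 1)
        ≤ ∫ τ in Ioi (2 : ℝ), τ ^ (-α - 1) :=
          setIntegral_mono_on (hint.mono_set (Ioi_subset_Ioi one_le_two))
            (integrableOn_Ioi_rpow_of_lt (by linarith) two_pos) measurableSet_Ioi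
            fun τ hτ => sub_one_rpow_mul_rpow_le_rpow hα0.le (le_of_lt hτ)
      _ ≤ 1 / α := integral_Ioi_two_rpow_le hα0

end

theorem stmt_8 (α B : ℝ) (hα : α ∈ Set.Ioo (0:ℝ) (1/2)) (hB : 2 ≤ B) :
    (∫ τ in Set.Ioi (1:ℝ), (τ - 1) ^ (-α) * (τ ^ (-α) - (τ + 1/B) ^ (-α))) ≤
      (1 / (1 - α)) * B⁻¹ := by
  obtain ⟨hα0, hα2⟩ := hα
  have hc : 0 < 1 / B := one_div_pos.2 (by linarith)
  have h1α : 0 < 1 - α := by linarith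
  calc (∫ τ in Ioi (1 : ℝ), (τ - 1) ^ (-α) * (τ ^ (-α) - (τ + 1 / B) ^ (-α)))
      ≤ ∫ τ in Ioi (1 : ℝ), α * (1 / B) * ((τ - 1) ^ (-α) * τ ^ (-α - 1)) := by
        refine setIntegral_mono_of_nonneg (fun τ (hτ : 1 < τ) => ?_) (fun τ (hτ : 1 < τ) => ?_)
          ((integrableOn_Ioi_one_sub_one_rpow_mul_rpow hα0 (by linarith)).const_mul _)
        · exact mul_nonneg (rpow_nonneg (by linarith) _)
            (sub_nonneg.2 (rpow_le_rpow_of_nonpos (by linarith) (by linarith) (by linarith)))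
        · calc (τ - 1) ^ (-α) * (τ ^ (-α) - (τ + 1 / B) ^ (-α))
              ≤ (τ - 1) ^ (-α) * (α * (1 / B) * τ ^ (-α - 1)) :=
                mul_le_mul_of_nonneg_left
                  (rpow_neg_sub_rpow_neg_add_le hα0.le (by linarith) (by linarith))
                  (rpow_nonneg (by linarith) _)
            _ = α * (1 / B) * ((τ - 1) ^ (-α) * τ ^ (-α - 1)) := by ring
    _ = α * (1 / B) * ∫ τ in Ioi (1 : ℝ), (τ - 1) ^ (-α) * τ ^ (-α - 1) := integral_const_mul _ _
    _ ≤ α * (1 / B) * (1 / (1 - α) + 1 / α) := by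
        gcongr; exact integral_Ioi_one_sub_one_rpow_mul_rpow_le hα0 (by linarith)
    _ = 1 / (1 - α) * B⁻¹ := by field_simp; ring
end

section
/- For α ∈ (0, 1/2), the limit as R → 0⁺ of R^(α-1) ∫₀^1 (1-τ)^(-α) (τ^(-α) - (τ+R)^(-α)) dτ equals 1/(1-α). -/
open MeasureTheory Real Set Filter

-- B: bracket bound
lemma lemB {α R τ : ℝ} (hα0 : 0 < α) (hα1 : α < 1) (hR : 0 < R) (hτ : 0 < τ) :
    τ ^ (-α) - (τ + R) ^ (-α) ≤ α * R * τ ^ (-1 - α) := by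
  set u := R / τ with hu_def
  have hu : 0 < u := div_pos hR hτ
  have h1 : (1 + u) ^ α ≤ 1 + α * u :=
    rpow_one_add_le_one_add_mul_self (by linarith) hα0.le hα1.le
  have hpos : (0:ℝ) < (1 + u) ^ α := rpow_pos_of_pos (by linarith) _
  have h2 : 1 - α * u ≤ (1 + u) ^ (-α) := by
    rw [Real.rpow_neg (by linarith : (0:ℝ) ≤ 1 + u), inv_eq_one_div]
    rcases le_or_gt (1 - α * u) 0 with h | h
    · exact h.trans (by positivity)
    · rw [le_div_iff₀ hpos]
      nlinarith [mul_le_mul_of_nonneg_left h1 h.le, sq_nonneg (α * u)]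
  have h3 : (τ + R) ^ (-α) = τ ^ (-α) * (1 + u) ^ (-α) := by
    rw [← Real.mul_rpow hτ.le (by linarith : (0:ℝ) ≤ 1 + u)]
    congr 1
    rw [hu_def]
    field_simp
  have h4 : τ ^ (-1 - α) = τ ^ (-α) * τ⁻¹ := by
    rw [show (-1 - α) = -α + (-1) by ring, Real.rpow_add hτ, Real.rpow_neg_one]
  have h5 : (0:ℝ) ≤ τ ^ (-α) := rpow_nonneg hτ.le _
  calc τ ^ (-α) - (τ + R) ^ (-α) = τ ^ (-α) * (1 - (1 + u) ^ (-α)) := by rw [h3]; ring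
    _ ≤ τ ^ (-α) * (α * u) := mul_le_mul_of_nonneg_left (by linarith) h5
    _ = α * R * τ ^ (-1 - α) := by
        rw [h4, hu_def]
        field_simp

-- A: (1-τ) factor bound, stated for x = 1 - τ
lemma lemA {α x : ℝ} (hα0 : 0 < α) (hx : 0 < x) :
    x ^ (-α) - 1 ≤ α * (1 - x) * x ^ (-1 - α) := by
  have hb : 1 + (1 + α) * (x - 1) ≤ (1 + (x - 1)) ^ (1 + α) :=
    one_add_mul_self_le_rpow_one_add (by linarith) (by linarith)
  rw [show (1:ℝ) + (x - 1) = x by ring] at hb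
  have key : x - x ^ (1 + α) ≤ α * (1 - x) := by nlinarith
  have e1 : x * x ^ (-1 - α) = x ^ (-α) := by
    rw [show x * x ^ (-1 - α) = x ^ (1:ℝ) * x ^ (-1 - α) by rw [Real.rpow_one],
      ← Real.rpow_add hx, show (1:ℝ) + (-1 - α) = -α by ring]
  have e2 : x ^ (1 + α) * x ^ (-1 - α) = 1 := by
    rw [← Real.rpow_add hx, show (1 + α) + (-1 - α) = (0:ℝ) by ring, Real.rpow_zero]
  have h := mul_le_mul_of_nonneg_right key (rpow_nonneg hx.le (-1 - α))
  rw [sub_mul, e1, e2] at h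
  linarith

lemma intmono {f g : ℝ → ℝ} (hf : IntervalIntegrable f volume 0 1)
    (hg : IntervalIntegrable g volume 0 1) (h : ∀ x ∈ Set.Ioo (0:ℝ) 1, f x ≤ g x) :
    ∫ x in (0:ℝ)..1, f x ≤ ∫ x in (0:ℝ)..1, g x := by
  apply intervalIntegral.integral_mono_ae_restrict zero_le_one hf hg
  have e : volume.restrict (Icc (0:ℝ) 1) = volume.restrict (Ioo (0:ℝ) 1) :=
    (Measure.restrict_congr_set Ioo_ae_eq_Icc).symm
  rw [EventuallyLE, e]
  exact (ae_restrict_mem measurableSet_Ioo).mono h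

lemma int_rpow_neg {α : ℝ} (hα1 : α < 1) :
    IntervalIntegrable (fun τ : ℝ => τ ^ (-α)) volume 0 1 :=
  intervalIntegral.intervalIntegrable_rpow' (by linarith)

lemma int_one_sub {α : ℝ} (hα1 : α < 1) :
    IntervalIntegrable (fun τ : ℝ => (1 - τ) ^ (-α)) volume 0 1 := by
  have := ((int_rpow_neg hα1).comp_sub_left 1).symm
  simpa using this

lemma int_shift {α R : ℝ} (hR : 0 < R) :
    IntervalIntegrable (fun τ : ℝ => (τ + R) ^ (-α)) volume 0 1 := by
  apply ContinuousOn.intervalIntegrable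
  apply ContinuousOn.rpow_const (by fun_prop)
  intro x hx
  rw [uIcc_of_le (by norm_num : (0:ℝ) ≤ 1)] at hx
  exact Or.inl (by nlinarith [hx.1] : x + R ≠ 0)

lemma meas_f {α R : ℝ} :
    Measurable (fun τ : ℝ => (1 - τ) ^ (-α) * (τ ^ (-α) - (τ + R) ^ (-α))) := by
  have h1 : Measurable (fun τ : ℝ => 1 - τ) := measurable_const.sub measurable_id
  have h2 : Measurable (fun τ : ℝ => τ + R) := measurable_id.add_const R
  fun_prop

lemma int_f {α R : ℝ} (hα0 : 0 < α) (hα1 : α < 1) (hR : 0 < R) :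
    IntervalIntegrable (fun τ : ℝ => (1 - τ) ^ (-α) * (τ ^ (-α) - (τ + R) ^ (-α)))
      volume 0 1 := by
  set D := ((1:ℝ)/2) ^ (-α) with hD
  have hD0 : 0 ≤ D := rpow_nonneg (by norm_num) _
  apply IntervalIntegrable.mono_fun'
    (g := fun τ => D * τ ^ (-α) + (D + R ^ (-α)) * (1 - τ) ^ (-α))
  · exact ((int_rpow_neg hα1).const_mul D).add ((int_one_sub hα1).const_mul _)
  · exact meas_f.aestronglyMeasurable
  · rw [uIoc_of_le (by norm_num : (0:ℝ) ≤ 1)]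
    filter_upwards [ae_restrict_mem measurableSet_Ioc] with τ hτ
    obtain ⟨hτ0, hτ1⟩ := hτ
    have ha : (0:ℝ) ≤ (1 - τ) ^ (-α) := rpow_nonneg (by linarith) _
    have hb : (0:ℝ) ≤ τ ^ (-α) := rpow_nonneg hτ0.le _
    have hc0 : (0:ℝ) ≤ (τ + R) ^ (-α) := rpow_nonneg (by linarith) _
    have hc' : (τ + R) ^ (-α) ≤ R ^ (-α) :=
      rpow_le_rpow_of_nonpos hR (by linarith) (by linarith)
    have hRα : (0:ℝ) ≤ R ^ (-α) := rpow_nonneg hR.le _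
    have habs : ‖(1 - τ) ^ (-α) * (τ ^ (-α) - (τ + R) ^ (-α))‖ ≤
        (1 - τ) ^ (-α) * τ ^ (-α) + (1 - τ) ^ (-α) * (τ + R) ^ (-α) := by
      rw [Real.norm_eq_abs, abs_mul, abs_of_nonneg ha, mul_comm, mul_comm ((1-τ)^(-α)) _,
        mul_comm ((1-τ)^(-α)) _, ← add_mul]
      apply mul_le_mul_of_nonneg_right _ ha
      exact (abs_sub _ _).trans (by rw [abs_of_nonneg hb, abs_of_nonneg hc0])
    have hmain : (1 - τ) ^ (-α) * τ ^ (-α) ≤ D * τ ^ (-α) + D * (1 - τ) ^ (-α) := by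
      rcases le_or_gt τ (1/2) with hhalf | hhalf
      · have : (1 - τ) ^ (-α) ≤ D :=
          rpow_le_rpow_of_nonpos (by norm_num) (by linarith) (by linarith)
        nlinarith
      · have : τ ^ (-α) ≤ D :=
          rpow_le_rpow_of_nonpos (by norm_num) (by linarith) (by linarith)
        nlinarith
    have h2 : (1 - τ) ^ (-α) * (τ + R) ^ (-α) ≤ R ^ (-α) * (1 - τ) ^ (-α) := by
      rw [mul_comm]
      exact mul_le_mul_of_nonneg_right hc' ha
    calc ‖(1 - τ) ^ (-α) * (τ ^ (-α) - (τ + R) ^ (-α))‖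
        ≤ (1 - τ) ^ (-α) * τ ^ (-α) + (1 - τ) ^ (-α) * (τ + R) ^ (-α) := habs
      _ ≤ D * τ ^ (-α) + (D + R ^ (-α)) * (1 - τ) ^ (-α) := by nlinarith

lemma val1 {α : ℝ} (hα1 : α < 1) : ∫ τ in (0:ℝ)..1, τ ^ (-α) = 1 / (1 - α) := by
  rw [integral_rpow (Or.inl (by linarith))]
  rw [Real.one_rpow, Real.zero_rpow (by intro h; linarith : -α + 1 ≠ 0)]
  ring_nf

lemma val2 {α : ℝ} (hα1 : α < 1) (R : ℝ) :
    ∫ τ in (0:ℝ)..1, (τ + R) ^ (-α) = ((1 + R) ^ (1 - α) - R ^ (1 - α)) / (1 - α) := by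
  rw [intervalIntegral.integral_comp_add_right (fun x : ℝ => x ^ (-α)) R]
  rw [integral_rpow (Or.inl (by linarith))]
  rw [show (-α + 1 : ℝ) = 1 - α by ring, zero_add]

lemma valJ {α : ℝ} (hα0 : 0 < α) (hα1 : α < 1) {R : ℝ} (hR : 0 < R) :
    ∫ τ in (0:ℝ)..1, (τ ^ (-α) - (τ + R) ^ (-α)) =
      (1 - (1 + R) ^ (1 - α) + R ^ (1 - α)) / (1 - α) := by
  rw [intervalIntegral.integral_sub (int_rpow_neg hα1) (int_shift hR), val1 hα1, val2 hα1 R]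
  ring

lemma keyid {a b c d : ℝ} (h : a * b = 1) (hd : d ≠ 0) :
    a * ((1 - c + b) / d) = (1 + a * (1 - c)) / d := by
  rw [← mul_div_assoc]
  congr 1
  linear_combination h

lemma mul_rpow_m1 {τ α : ℝ} (hτ : 0 < τ) : τ * τ ^ (-1 - α) = τ ^ (-α) := by
  rw [show τ * τ ^ (-1 - α) = τ ^ (1:ℝ) * τ ^ (-1 - α) by rw [Real.rpow_one],
    ← Real.rpow_add hτ, show (1:ℝ) + (-1 - α) = -α by ring]

theorem stmt_9 (α : ℝ) (hα : α ∈ Set.Ioo (0:ℝ) (1/2)) :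
    Filter.Tendsto
      (fun R : ℝ => R ^ (α - 1) *
        ∫ τ in (0:ℝ)..1, (1 - τ) ^ (-α) * (τ ^ (-α) - (τ + R) ^ (-α)))
      (nhdsWithin 0 (Set.Ioi (0:ℝ))) (nhds (1 / (1 - α))) := by
  obtain ⟨hα0, hα2⟩ := hα
  have hα1 : α < 1 := by linarith
  have h1α : (0:ℝ) < 1 - α := by linarith
  set C : ℝ := ((1:ℝ)/2) ^ (-1 - α) with hC
  have hC0 : 0 ≤ C := rpow_nonneg (by norm_num) _
  set g₂ : ℝ → ℝ := fun τ => α^2 * C * τ ^ (-α) + α * C * (1 - τ) ^ (-α) with hg₂def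
  have hg₂int : IntervalIntegrable g₂ volume 0 1 :=
    ((int_rpow_neg hα1).const_mul _).add ((int_one_sub hα1).const_mul _)
  set K : ℝ := ∫ τ in (0:ℝ)..1, g₂ τ with hK
  -- limit of R ^ α
  have hαt : Tendsto (fun R : ℝ => R ^ α) (nhdsWithin 0 (Set.Ioi (0:ℝ))) (nhds 0) := by
    have h := (Real.continuousAt_rpow_const 0 α (Or.inr hα0.le)).tendsto
    rw [Real.zero_rpow hα0.ne'] at h
    exact h.mono_left nhdsWithin_le_nhds
  -- limit of u R = R^(α-1) * (1 - (1+R)^(1-α))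
  have hu : Tendsto (fun R : ℝ => R ^ (α - 1) * (1 - (1 + R) ^ (1 - α)))
      (nhdsWithin 0 (Set.Ioi (0:ℝ))) (nhds 0) := by
    apply tendsto_of_tendsto_of_tendsto_of_le_of_le'
      (g := fun R : ℝ => -((1 - α) * R ^ α)) (h := fun _ => (0:ℝ))
    · have := (hαt.const_mul (1 - α)).neg
      simpa using this
    · exact tendsto_const_nhds
    · filter_upwards [self_mem_nhdsWithin] with R hR
      have hR : (0:ℝ) < R := hR
      have hbern : (1 + R) ^ (1 - α) ≤ 1 + (1 - α) * R :=
        rpow_one_add_le_one_add_mul_self (by linarith) (by linarith) (by linarith)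
      have hpow : (0:ℝ) ≤ R ^ (α - 1) := rpow_nonneg hR.le _
      have hcancel : R ^ (α - 1) * R = R ^ α := by
        rw [show R ^ (α-1) * R = R ^ (α-1) * R ^ (1:ℝ) by rw [Real.rpow_one],
          ← Real.rpow_add hR, show α - 1 + 1 = α by ring]
      have h1 : R ^ (α - 1) * (-( (1 - α) * R)) ≤ R ^ (α - 1) * (1 - (1 + R) ^ (1 - α)) :=
        mul_le_mul_of_nonneg_left (by linarith) hpow
      calc -((1 - α) * R ^ α) = R ^ (α - 1) * (-((1 - α) * R)) := by
              rw [← hcancel]; ring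
        _ ≤ _ := h1
    · filter_upwards [self_mem_nhdsWithin] with R hR
      have hR : (0:ℝ) < R := hR
      have hge : (1:ℝ) ≤ (1 + R) ^ (1 - α) := Real.one_le_rpow (by linarith) (by linarith)
      have hpow : (0:ℝ) ≤ R ^ (α - 1) := rpow_nonneg hR.le _
      exact mul_nonpos_of_nonneg_of_nonpos hpow (by linarith)
  -- limits of lower and upper bound functions
  have hlow : Tendsto (fun R : ℝ => (1 + R ^ (α - 1) * (1 - (1 + R) ^ (1 - α))) / (1 - α))
      (nhdsWithin 0 (Set.Ioi (0:ℝ))) (nhds (1 / (1 - α))) := by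
    have := (tendsto_const_nhds (x := (1:ℝ)).add hu).div_const (1 - α)
    simpa using this
  have hup : Tendsto (fun R : ℝ =>
      (1 + R ^ (α - 1) * (1 - (1 + R) ^ (1 - α))) / (1 - α) + K * R ^ α)
      (nhdsWithin 0 (Set.Ioi (0:ℝ))) (nhds (1 / (1 - α))) := by
    have := hlow.add ((hαt.const_mul K))
    simpa using this
  apply tendsto_of_tendsto_of_tendsto_of_le_of_le' hlow hup
  -- lower bound
  · filter_upwards [self_mem_nhdsWithin] with R hRmem
    have hR : (0:ℝ) < R := hRmem
    have hpow : (0:ℝ) < R ^ (α - 1) := rpow_pos_of_pos hR _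
    have hcancel1 : R ^ (α - 1) * R ^ (1 - α) = 1 := by
      rw [← Real.rpow_add hR, show α - 1 + (1 - α) = 0 by ring, Real.rpow_zero]
    have hJle : (1 - (1 + R) ^ (1 - α) + R ^ (1 - α)) / (1 - α) ≤
        ∫ τ in (0:ℝ)..1, (1 - τ) ^ (-α) * (τ ^ (-α) - (τ + R) ^ (-α)) := by
      rw [← valJ hα0 hα1 hR]
      apply intmono ((int_rpow_neg hα1).sub (int_shift hR)) (int_f hα0 hα1 hR)
      intro τ hτ
      obtain ⟨hτ0, hτ1⟩ := hτ
      have hbr : 0 ≤ τ ^ (-α) - (τ + R) ^ (-α) :=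
        sub_nonneg.mpr (rpow_le_rpow_of_nonpos hτ0 (by linarith) (by linarith))
      have hone : (1:ℝ) ≤ (1 - τ) ^ (-α) :=
        Real.one_le_rpow_of_pos_of_le_one_of_nonpos (by linarith) (by linarith) (by linarith)
      nlinarith
    have := mul_le_mul_of_nonneg_left hJle hpow.le
    calc (1 + R ^ (α - 1) * (1 - (1 + R) ^ (1 - α))) / (1 - α)
        = R ^ (α - 1) * ((1 - (1 + R) ^ (1 - α) + R ^ (1 - α)) / (1 - α)) :=
          (keyid hcancel1 (by linarith)).symm
      _ ≤ _ := this
  -- upper bound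
  · filter_upwards [self_mem_nhdsWithin] with R hRmem
    have hR : (0:ℝ) < R := hRmem
    have hpow : (0:ℝ) < R ^ (α - 1) := rpow_pos_of_pos hR _
    have hcancel1 : R ^ (α - 1) * R ^ (1 - α) = 1 := by
      rw [← Real.rpow_add hR, show α - 1 + (1 - α) = 0 by ring, Real.rpow_zero]
    have hcancel : R ^ (α - 1) * R = R ^ α := by
      rw [show R ^ (α-1) * R = R ^ (α-1) * R ^ (1:ℝ) by rw [Real.rpow_one],
        ← Real.rpow_add hR, show α - 1 + 1 = α by ring]
    have hIle : (∫ τ in (0:ℝ)..1, (1 - τ) ^ (-α) * (τ ^ (-α) - (τ + R) ^ (-α))) ≤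
        (1 - (1 + R) ^ (1 - α) + R ^ (1 - α)) / (1 - α) + R * K := by
      have hmono : (∫ τ in (0:ℝ)..1, (1 - τ) ^ (-α) * (τ ^ (-α) - (τ + R) ^ (-α))) ≤
          ∫ τ in (0:ℝ)..1, ((τ ^ (-α) - (τ + R) ^ (-α)) + R * g₂ τ) := by
        apply intmono (int_f hα0 hα1 hR)
          (((int_rpow_neg hα1).sub (int_shift hR)).add (hg₂int.const_mul R))
        intro τ hτ
        obtain ⟨hτ0, hτ1⟩ := hτ
        have hbr : 0 ≤ τ ^ (-α) - (τ + R) ^ (-α) :=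
          sub_nonneg.mpr (rpow_le_rpow_of_nonpos hτ0 (by linarith) (by linarith))
        have hone : (1:ℝ) ≤ (1 - τ) ^ (-α) :=
          Real.one_le_rpow_of_pos_of_le_one_of_nonpos (by linarith) (by linarith) (by linarith)
        have hB := lemB hα0 hα1 hR hτ0
        have hA := lemA (x := 1 - τ) hα0 (by linarith)
        rw [show (1:ℝ) - (1 - τ) = τ by ring] at hA
        have hkey : ((1 - τ) ^ (-α) - 1) * (τ ^ (-α) - (τ + R) ^ (-α)) ≤ R * g₂ τ := by
          rcases le_or_gt τ (1/2) with hhalf | hhalf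
          · have hC1 : (1 - τ) ^ (-1 - α) ≤ C :=
              rpow_le_rpow_of_nonpos (by norm_num) (by linarith) (by linarith)
            have hA' : (1 - τ) ^ (-α) - 1 ≤ α * τ * C := by
              refine hA.trans ?_
              have := mul_le_mul_of_nonneg_left hC1 (by positivity : (0:ℝ) ≤ α * τ)
              linarith
            have hprod := mul_le_mul hA' hB hbr (by positivity)
            have hμ : τ * τ ^ (-1 - α) = τ ^ (-α) := mul_rpow_m1 hτ0
            have hτn : (0:ℝ) ≤ τ ^ (-α) := rpow_nonneg hτ0.le _
            have h1τn : (0:ℝ) ≤ (1 - τ) ^ (-α) := rpow_nonneg (by linarith) _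
            have : α * τ * C * (α * R * τ ^ (-1 - α)) = R * (α^2 * C * τ ^ (-α)) := by
              rw [← hμ]; ring
            rw [this] at hprod
            refine hprod.trans ?_
            simp only [hg₂def]
            have h4 : (0:ℝ) ≤ R * (α * C * (1 - τ) ^ (-α)) :=
              mul_nonneg hR.le (mul_nonneg (mul_nonneg hα0.le hC0) h1τn)
            linarith
          · have hτC : τ ^ (-1 - α) ≤ C :=
              rpow_le_rpow_of_nonpos (by norm_num) hhalf.le (by linarith)
            have hB' : τ ^ (-α) - (τ + R) ^ (-α) ≤ α * R * C := by
              refine hB.trans ?_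
              have := mul_le_mul_of_nonneg_left hτC (by positivity : (0:ℝ) ≤ α * R)
              linarith
            have h1τn : (0:ℝ) ≤ (1 - τ) ^ (-α) := rpow_nonneg (by linarith) _
            have hA'' : (1 - τ) ^ (-α) - 1 ≤ (1 - τ) ^ (-α) := by linarith
            have hprod := mul_le_mul hA'' hB' hbr h1τn
            refine hprod.trans ?_
            simp only [hg₂def]
            have hτn : (0:ℝ) ≤ τ ^ (-α) := rpow_nonneg hτ0.le _
            have e : (1 - τ) ^ (-α) * (α * R * C) = R * (α * C * (1 - τ) ^ (-α)) := by ring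
            have h4 : (0:ℝ) ≤ R * (α ^ 2 * C * τ ^ (-α)) :=
              mul_nonneg hR.le (mul_nonneg (mul_nonneg (sq_nonneg α) hC0) hτn)
            linarith
        nlinarith
      rw [intervalIntegral.integral_add ((int_rpow_neg hα1).sub (int_shift hR))
        (hg₂int.const_mul R), valJ hα0 hα1 hR, intervalIntegral.integral_const_mul] at hmono
      exact hmono
    have hfin := mul_le_mul_of_nonneg_left hIle hpow.le
    refine hfin.trans (le_of_eq ?_)
    have : R ^ (α - 1) * (R * K) = K * R ^ α := by rw [← hcancel]; ring
    rw [mul_add, this]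
    congr 1
    exact keyid hcancel1 (by linarith)
end

section
/- For α ∈ (0, 1/2) and all B with 0 ≤ B ≤ 2, the integral ∫₀^∞ |B - v|^(-α) (v^(-α) - (1+v)^(-α)) dv is at most π B^(1-2α) + (1/(1-2α)) (2-B)^(1-2α) + 3/(1-2α); in particular sup_{0 ≤ B ≤ 2} of this integral is finite. -/
/-!
Split `(0, ∞)` at `B`, `2` and `3`. On `(0, B)` the integrand is at most
`((B - v) v) ^ (-α) ≤ B ^ (1 - 2α) ((B - v) v) ^ (-1/2)`, and `∫₀^B ((B - v) v) ^ (-1/2) = π`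
(an antiderivative is `arcsin (2v/B - 1)`). On `(B, 2)` it is at most `(v - B) ^ (-2α)`, on `(2, 3)`
at most `(v - 2) ^ (-α)`, and on `(3, ∞)` the weight is at most `1` while
`v ^ (-α) - (1 + v) ^ (-α) ≤ α v ^ (-α - 1)` by Bernoulli's inequality.
-/

open MeasureTheory Real Set

theorem integrableOn_and_setIntegral_le_of_le {X : Type*} [MeasurableSpace X]
    {μ : Measure X} {f g : X → ℝ} {s : Set X} (hg : IntegrableOn g s μ) (hs : MeasurableSet s)
    (hf : Measurable f) (hf0 : ∀ x ∈ s, 0 ≤ f x) (hfg : ∀ x ∈ s, f x ≤ g x) :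
    IntegrableOn f s μ ∧ ∫ x in s, f x ∂μ ≤ ∫ x in s, g x ∂μ := by
  have hfi : IntegrableOn f s μ := hg.mono' hf.aestronglyMeasurable <|
    ae_restrict_of_forall_mem hs fun x hx => by
      rw [Real.norm_of_nonneg (hf0 x hx)]; exact hfg x hx
  exact ⟨hfi, setIntegral_mono_on hfi hg hs hfg⟩

theorem integrableOn_Ioc_sub_rpow_and_integral {c d r : ℝ} (hcd : c ≤ d) (hr : -1 < r) :
    IntegrableOn (fun v => (v - c) ^ r) (Ioc c d) ∧
      ∫ v in Ioc c d, (v - c) ^ r = (d - c) ^ (r + 1) / (r + 1) := by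
  have h := (intervalIntegral.intervalIntegrable_rpow' (a := 0) (b := d - c) hr).comp_sub_right c
  rw [zero_add, sub_add_cancel, intervalIntegrable_iff_integrableOn_Ioc_of_le hcd] at h
  refine ⟨h, ?_⟩
  rw [← intervalIntegral.integral_of_le hcd,
    intervalIntegral.integral_comp_sub_right (fun v => v ^ r), sub_self,
    integral_rpow (Or.inl hr), zero_rpow (by linarith), sub_zero]

theorem rpow_neg_sub_rpow_neg_one_add_le {α v : ℝ} (hα₀ : 0 ≤ α) (hα₁ : α ≤ 1) (hv : 0 < v) :
    v ^ (-α) - (1 + v) ^ (-α) ≤ α * v ^ (-α - 1) := by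
  have hv₁ : 0 < 1 + v := by linarith
  have hbernoulli : (1 + v) ^ α ≤ v ^ α + α * v ^ (α - 1) :=
    calc (1 + v) ^ α = v ^ α * (1 + 1 / v) ^ α := by
          rw [← mul_rpow hv.le (by positivity)]; field_simp; ring_nf
      _ ≤ v ^ α * (1 + α * (1 / v)) := by
          gcongr
          exact rpow_one_add_le_one_add_mul_self (by linarith [one_div_pos.2 hv]) hα₀ hα₁
      _ = v ^ α + α * v ^ (α - 1) := by rw [rpow_sub_one hv.ne']; ring
  have hmono : v ^ α ≤ (1 + v) ^ α := rpow_le_rpow hv.le (by linarith) hα₀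
  have hpow : v ^ (-α - 1) = v ^ (α - 1) / (v ^ α * v ^ α) := by
    rw [eq_div_iff (by positivity), ← rpow_add hv, ← rpow_add hv]; ring_nf
  rw [rpow_neg hv.le, rpow_neg hv₁.le, inv_sub_inv (by positivity) (by positivity), hpow,
    mul_div_assoc']
  gcongr
  linarith

theorem hasDerivAt_arcsin_two_mul_div_sub_one {B x : ℝ} (hx : x ∈ Ioo 0 B) :
    HasDerivAt (fun v => arcsin (2 * v / B - 1)) (((B - x) * x) ^ (-(1 / 2) : ℝ)) x := by
  obtain ⟨hx₀, hxB⟩ := hx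
  have hB : 0 < B := hx₀.trans hxB
  have hprod : 0 < (B - x) * x := mul_pos (by linarith) hx₀
  have hlo : 2 * x / B - 1 ≠ -1 := by
    rw [Ne, sub_eq_neg_self, div_eq_zero_iff]; push Not; exact ⟨by positivity, hB.ne'⟩
  have hhi : 2 * x / B - 1 ≠ 1 := by
    rw [Ne, sub_eq_iff_eq_add, div_eq_iff hB.ne']; linarith
  have hlin : HasDerivAt (fun v : ℝ => 2 * v / B - 1) (2 / B) x := by
    simpa using (((hasDerivAt_id x).const_mul (2 : ℝ)).div_const B).sub_const 1
  refine ((hasDerivAt_arcsin hlo hhi).comp x hlin).congr_deriv ?_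
  have hsq : 1 - (2 * x / B - 1) ^ 2 = (2 / B) ^ 2 * ((B - x) * x) := by field_simp; ring
  rw [hsq, sqrt_mul (by positivity), sqrt_sq (by positivity), rpow_neg hprod.le, sqrt_eq_rpow]
  field_simp

theorem integrableOn_sub_mul_rpow_neg_half_and_integral {B : ℝ} (hB : 0 < B) :
    IntegrableOn (fun v => ((B - v) * v) ^ (-(1 / 2) : ℝ)) (Ioc 0 B) ∧
      ∫ v in Ioc 0 B, ((B - v) * v) ^ (-(1 / 2) : ℝ) = π := by
  have hcont : ContinuousOn (fun v => arcsin (2 * v / B - 1)) (Icc 0 B) := by fun_prop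
  have hderiv : ∀ x ∈ Ioo 0 B, _ := fun x => hasDerivAt_arcsin_two_mul_div_sub_one (x := x)
  have hint := intervalIntegral.integrableOn_deriv_of_nonneg hcont hderiv fun x hx =>
    (rpow_pos_of_pos (mul_pos (sub_pos.2 hx.2) hx.1) _).le
  refine ⟨hint, ?_⟩
  rw [← intervalIntegral.integral_of_le hB.le, intervalIntegral.integral_eq_sub_of_hasDerivAt_of_le
    hB.le hcont hderiv ((intervalIntegrable_iff_integrableOn_Ioc_of_le hB.le).2 hint)]
  norm_num [hB.ne']

theorem rpow_neg_le_rpow_mul_rpow_neg_half {t c α : ℝ} (ht : 0 < t) (htc : t ≤ c)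
    (hα : α ≤ 1 / 2) : t ^ (-α) ≤ c ^ (1 / 2 - α) * t ^ (-(1 / 2) : ℝ) := by
  rw [show -α = (1 / 2 - α) + -(1 / 2) by ring, rpow_add ht]
  gcongr

noncomputable def weightedIncrement (α B v : ℝ) : ℝ := |B - v| ^ (-α) * (v ^ (-α) - (1 + v) ^ (-α))

namespace weightedIncrement

variable {α B v : ℝ}

theorem measurable (α B : ℝ) : Measurable (weightedIncrement α B) := by
  unfold weightedIncrement; fun_prop

theorem nonneg (hα : 0 ≤ α) (hv : 0 < v) : 0 ≤ weightedIncrement α B v :=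
  mul_nonneg (by positivity) <|
    sub_nonneg.2 <| rpow_le_rpow_of_nonpos hv (by linarith) (by linarith)

theorem le_abs_rpow_mul_rpow (hv : 0 < v) :
    weightedIncrement α B v ≤ |B - v| ^ (-α) * v ^ (-α) := by
  unfold weightedIncrement
  gcongr
  exact sub_le_self _ (by positivity)

theorem integrableOn_Ioc_zero_and_integral_le (hα₀ : 0 ≤ α) (hα : α ≤ 1 / 2) (hB : 0 ≤ B) :
    IntegrableOn (weightedIncrement α B) (Ioc 0 B) ∧
      ∫ v in Ioc 0 B, weightedIncrement α B v ≤ π * B ^ (1 - 2 * α) := by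
  rcases hB.eq_or_lt with rfl | hB
  · simp only [Ioc_self, integrableOn_empty, Measure.restrict_empty, integral_zero_measure,
      true_and]
    positivity
  obtain ⟨hint, hpi⟩ := integrableOn_sub_mul_rpow_neg_half_and_integral hB
  have hbound : ∀ v ∈ Ioo 0 B,
      weightedIncrement α B v ≤ B ^ (1 - 2 * α) * ((B - v) * v) ^ (-(1 / 2) : ℝ) := by
    rintro v ⟨hv₀, hvB⟩
    have hprod : (B - v) * v ≤ B ^ 2 := by nlinarith
    calc weightedIncrement α B v ≤ |B - v| ^ (-α) * v ^ (-α) := le_abs_rpow_mul_rpow hv₀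
      _ = ((B - v) * v) ^ (-α) := by
          rw [abs_of_pos (sub_pos.2 hvB), mul_rpow (sub_pos.2 hvB).le hv₀.le]
      _ ≤ (B ^ 2) ^ (1 / 2 - α) * ((B - v) * v) ^ (-(1 / 2) : ℝ) :=
          rpow_neg_le_rpow_mul_rpow_neg_half (mul_pos (sub_pos.2 hvB) hv₀) hprod hα
      _ = B ^ (1 - 2 * α) * ((B - v) * v) ^ (-(1 / 2) : ℝ) := by
          rw [← rpow_natCast, ← rpow_mul hB.le]; congr 2; push_cast; ring
  rw [integrableOn_Ioc_iff_integrableOn_Ioo, integral_Ioc_eq_integral_Ioo]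
  obtain ⟨hfi, hle⟩ := integrableOn_and_setIntegral_le_of_le
    (IntegrableOn.mono_set (hint.const_mul (B ^ (1 - 2 * α))) Ioo_subset_Ioc_self)
    measurableSet_Ioo (measurable α B) (fun v hv => nonneg hα₀ hv.1) hbound
  refine ⟨hfi, hle.trans_eq ?_⟩
  rw [integral_const_mul, ← integral_Ioc_eq_integral_Ioo, hpi, mul_comm]

theorem integrableOn_Ioc_and_integral_le {d : ℝ} (hα₀ : 0 ≤ α) (hα : α < 1 / 2) (hB : 0 ≤ B)
    (hBd : B ≤ d) :
    IntegrableOn (weightedIncrement α B) (Ioc B d) ∧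
      ∫ v in Ioc B d, weightedIncrement α B v ≤ 1 / (1 - 2 * α) * (d - B) ^ (1 - 2 * α) := by
  obtain ⟨hint, hval⟩ := integrableOn_Ioc_sub_rpow_and_integral hBd (r := -(2 * α)) (by linarith)
  have hbound : ∀ v ∈ Ioc B d, weightedIncrement α B v ≤ (v - B) ^ (-(2 * α)) := by
    rintro v ⟨hBv, -⟩
    have hvB : 0 < v - B := sub_pos.2 hBv
    calc weightedIncrement α B v ≤ |B - v| ^ (-α) * v ^ (-α) := le_abs_rpow_mul_rpow (by linarith)
      _ ≤ (v - B) ^ (-α) * (v - B) ^ (-α) := by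
          rw [abs_sub_comm, abs_of_pos hvB]
          exact mul_le_mul_of_nonneg_left
            (rpow_le_rpow_of_nonpos hvB (by linarith) (by linarith)) (by positivity)
      _ = (v - B) ^ (-(2 * α)) := by rw [← rpow_add hvB]; ring_nf
  obtain ⟨hfi, hle⟩ := integrableOn_and_setIntegral_le_of_le hint measurableSet_Ioc (measurable α B)
    (fun v hv => nonneg hα₀ (by linarith [hv.1])) hbound
  refine ⟨hfi, hle.trans_eq ?_⟩
  rw [hval]; ring_nf

theorem integrableOn_Ioc_two_three_and_integral_le (hα₀ : 0 ≤ α) (hα : α < 1) (hB : B ≤ 2) :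
    IntegrableOn (weightedIncrement α B) (Ioc 2 3) ∧
      ∫ v in Ioc 2 3, weightedIncrement α B v ≤ 1 / (1 - α) := by
  obtain ⟨hint, hval⟩ :=
    integrableOn_Ioc_sub_rpow_and_integral (c := 2) (d := 3) (by norm_num) (r := -α) (by linarith)
  have hbound : ∀ v ∈ Ioc (2 : ℝ) 3, weightedIncrement α B v ≤ (v - 2) ^ (-α) := by
    rintro v ⟨h2v, -⟩
    calc weightedIncrement α B v ≤ |B - v| ^ (-α) * v ^ (-α) := le_abs_rpow_mul_rpow (by linarith)
      _ ≤ (v - 2) ^ (-α) * 1 := by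
          rw [abs_sub_comm, abs_of_pos (by linarith)]
          exact mul_le_mul (rpow_le_rpow_of_nonpos (by linarith) (by linarith) (by linarith))
            (rpow_le_one_of_one_le_of_nonpos (by linarith) (by linarith)) (by positivity)
            (by positivity)
      _ = (v - 2) ^ (-α) := mul_one _
  obtain ⟨hfi, hle⟩ := integrableOn_and_setIntegral_le_of_le hint measurableSet_Ioc (measurable α B)
    (fun v hv => nonneg hα₀ (by linarith [hv.1])) hbound
  refine ⟨hfi, hle.trans_eq ?_⟩
  rw [hval]; norm_num; ring_nf

theorem integrableOn_Ioi_three_and_integral_le (hα₀ : 0 < α) (hα : α ≤ 1) (hB : B ≤ 2) :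
    IntegrableOn (weightedIncrement α B) (Ioi 3) ∧
      ∫ v in Ioi 3, weightedIncrement α B v ≤ 1 := by
  have hint : IntegrableOn (fun v => α * v ^ (-α - 1)) (Ioi 3) :=
    (integrableOn_Ioi_rpow_of_lt (by linarith) (by norm_num)).const_mul α
  have hbound : ∀ v ∈ Ioi (3 : ℝ), weightedIncrement α B v ≤ α * v ^ (-α - 1) := by
    intro v (h3v : 3 < v)
    calc weightedIncrement α B v ≤ 1 * (v ^ (-α) - (1 + v) ^ (-α)) := by
          unfold weightedIncrement
          gcongr
          · exact sub_nonneg.2 <| rpow_le_rpow_of_nonpos (by linarith) (by linarith) (by linarith)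
          · exact rpow_le_one_of_one_le_of_nonpos
              (by rw [abs_sub_comm, abs_of_pos (by linarith)]; linarith) (by linarith)
      _ ≤ α * v ^ (-α - 1) := by
          rw [one_mul]; exact rpow_neg_sub_rpow_neg_one_add_le hα₀.le hα (by linarith)
  obtain ⟨hfi, hle⟩ := integrableOn_and_setIntegral_le_of_le hint measurableSet_Ioi (measurable α B)
    (fun v (hv : 3 < v) => nonneg hα₀.le (by linarith)) hbound
  refine ⟨hfi, hle.trans ?_⟩
  rw [integral_const_mul, integral_Ioi_rpow_of_lt (by linarith) (by norm_num),
    show -α - 1 + 1 = -α by ring, neg_div_neg_eq, mul_div_cancel₀ _ hα₀.ne']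
  exact rpow_le_one_of_one_le_of_nonpos (by norm_num) (by linarith)

end weightedIncrement

theorem integral_weightedIncrement_le {α B : ℝ} (hα₀ : 0 < α) (hα : α < 1 / 2) (hB : 0 ≤ B)
    (hB2 : B ≤ 2) :
    ∫ v in Ioi 0, weightedIncrement α B v ≤
      π * B ^ (1 - 2 * α) + 1 / (1 - 2 * α) * (2 - B) ^ (1 - 2 * α) + 3 / (1 - 2 * α) := by
  obtain ⟨hi₁, hI₁⟩ := weightedIncrement.integrableOn_Ioc_zero_and_integral_le hα₀.le hα.le hB
  obtain ⟨hi₂, hI₂⟩ := weightedIncrement.integrableOn_Ioc_and_integral_le hα₀.le hα hB hB2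
  obtain ⟨hi₃, hI₃⟩ :=
    weightedIncrement.integrableOn_Ioc_two_three_and_integral_le hα₀.le (by linarith) hB2
  obtain ⟨hi₄, hI₄⟩ :=
    weightedIncrement.integrableOn_Ioi_three_and_integral_le hα₀ (by linarith) hB2
  have hu₂ : Ioc 0 B ∪ Ioc B 2 = Ioc (0 : ℝ) 2 := Ioc_union_Ioc_eq_Ioc hB hB2
  have hu₃ : Ioc 0 2 ∪ Ioc 2 3 = Ioc (0 : ℝ) 3 := Ioc_union_Ioc_eq_Ioc (by norm_num) (by norm_num)
  have hu₄ : Ioc 0 3 ∪ Ioi 3 = Ioi (0 : ℝ) := Ioc_union_Ioi_eq_Ioi (by norm_num)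
  have hi₁₂ : IntegrableOn (weightedIncrement α B) (Ioc 0 2) := hu₂ ▸ hi₁.union hi₂
  have hi₁₂₃ : IntegrableOn (weightedIncrement α B) (Ioc 0 3) := hu₃ ▸ hi₁₂.union hi₃
  have hsplit : ∫ v in Ioi 0, weightedIncrement α B v =
      (∫ v in Ioc 0 B, weightedIncrement α B v) + (∫ v in Ioc B 2, weightedIncrement α B v) +
        (∫ v in Ioc 2 3, weightedIncrement α B v) + ∫ v in Ioi 3, weightedIncrement α B v := by
    rw [← hu₄, setIntegral_union Ioc_disjoint_Ioi_same measurableSet_Ioi hi₁₂₃ hi₄, ← hu₃,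
      setIntegral_union (Ioc_disjoint_Ioc_of_le le_rfl) measurableSet_Ioc hi₁₂ hi₃, ← hu₂,
      setIntegral_union (Ioc_disjoint_Ioc_of_le le_rfl) measurableSet_Ioc hi₁ hi₂]
  have hexp : 0 < 1 - 2 * α := by linarith
  have htail : 1 / (1 - α) + 1 ≤ 3 / (1 - 2 * α) := by
    rw [div_add_one (by linarith), div_le_div_iff₀ (by linarith) hexp]
    nlinarith
  rw [hsplit]
  linarith

theorem stmt_10 (α : ℝ) (hα : α ∈ Set.Ioo (0:ℝ) (1/2)) :
    (∀ B ∈ Set.Icc (0:ℝ) 2,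
      (∫ v in Set.Ioi (0:ℝ), |B - v| ^ (-α) * (v ^ (-α) - (1 + v) ^ (-α))) ≤
        Real.pi * B ^ (1 - 2*α) + (1 / (1 - 2*α)) * (2 - B) ^ (1 - 2*α)
          + 3 / (1 - 2*α)) ∧
    ∃ M : ℝ, ∀ B ∈ Set.Icc (0:ℝ) 2,
      (∫ v in Set.Ioi (0:ℝ), |B - v| ^ (-α) * (v ^ (-α) - (1 + v) ^ (-α))) ≤ M := by
  obtain ⟨hα₀, hα⟩ := hα
  have hbound : ∀ B ∈ Icc (0 : ℝ) 2, ∫ v in Ioi 0, weightedIncrement α B v ≤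
      π * B ^ (1 - 2 * α) + 1 / (1 - 2 * α) * (2 - B) ^ (1 - 2 * α) + 3 / (1 - 2 * α) :=
    fun B hB => integral_weightedIncrement_le hα₀ hα hB.1 hB.2
  refine ⟨hbound, π * 2 ^ (1 - 2 * α) + 1 / (1 - 2 * α) * 2 ^ (1 - 2 * α) + 3 / (1 - 2 * α),
    fun B hB => (hbound B hB).trans ?_⟩
  have hexp : 0 ≤ 1 - 2 * α := by linarith
  have hexp' : 0 ≤ 1 / (1 - 2 * α) := by positivity
  gcongr <;> linarith [hB.1, hB.2]
end

section
/- For α ∈ (0, 1/2), one has sup over all A ≥ 0 and all B ≥ 2 of ∫₀^A |B - v|^(-α) (v^(-α) - (1+v)^(-α)) dv is finite. -/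
/-!
Write `h v = v ^ (-α) - (1 + v) ^ (-α) ≥ 0`. Where `|B - v| ≥ 1` the weight `|B - v| ^ (-α)` is at
most `1`; where `|B - v| < 1` we have `v ≥ B - 1 ≥ 1`, so `h v ≤ 1`. Hence the integrand is at most
`h v + 1_{|B - v| < 1} |B - v| ^ (-α)`. The integral of `h` over `[0, A]` telescopes to
`(A ^ (1 - α) + 1 - (1 + A) ^ (1 - α)) / (1 - α) ≤ 1 / (1 - α)`, and the second term is a translate
of the integrable function `1_{|u| < 1} |u| ^ (-α)`, whose integral does not depend on `B`.
-/

open MeasureTheory Real Set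

section

variable {r : ℝ}

theorem intervalIntegrable_abs_rpow (hr : -1 < r) (a b : ℝ) :
    IntervalIntegrable (fun x : ℝ => |x| ^ r) volume a b := by
  have hpos : ∀ c, 0 ≤ c → IntervalIntegrable (fun x : ℝ => |x| ^ r) volume 0 c := fun c hc =>
    (intervalIntegral.intervalIntegrable_rpow' hr).congr fun x hx => by
      rw [uIoc_of_le hc] at hx
      simp only [abs_of_pos hx.1]
  have hall : ∀ c, IntervalIntegrable (fun x : ℝ => |x| ^ r) volume 0 c := by
    intro c
    rcases le_total 0 c with hc | hc
    · exact hpos c hc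
    · rw [IntervalIntegrable.iff_comp_neg]
      simpa only [abs_neg, neg_zero] using hpos (-c) (by linarith)
  exact (hall a).symm.trans (hall b)

theorem intervalIntegrable_one_add_rpow (hr : -1 < r) (a b : ℝ) :
    IntervalIntegrable (fun x : ℝ => (1 + x) ^ r) volume a b := by
  simpa using
    (intervalIntegral.intervalIntegrable_rpow' (a := 1 + a) (b := 1 + b) hr).comp_add_left 1

theorem integral_rpow_sub_one_add_rpow_le (hr : -1 < r) {A : ℝ} (hA : 0 ≤ A) :
    ∫ v in (0:ℝ)..A, (v ^ r - (1 + v) ^ r) ≤ 1 / (r + 1) := by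
  have hr1 : 0 < r + 1 := by linarith
  have hmono : A ^ (r + 1) ≤ (1 + A) ^ (r + 1) := rpow_le_rpow hA (by linarith) hr1.le
  rw [intervalIntegral.integral_sub (intervalIntegral.intervalIntegrable_rpow' hr)
      (intervalIntegrable_one_add_rpow hr 0 A),
    intervalIntegral.integral_comp_add_left (fun x => x ^ r), integral_rpow (Or.inl hr),
    integral_rpow (Or.inl hr), zero_rpow hr1.ne', add_zero, one_rpow, div_sub_div_same,
    div_le_div_iff_of_pos_right hr1]
  linarith

end

section

variable {α v : ℝ}

theorem one_add_rpow_neg_le_rpow_neg (hα : 0 ≤ α) (hv : 0 < v) :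
    (1 + v) ^ (-α) ≤ v ^ (-α) :=
  rpow_le_rpow_of_nonpos hv (by linarith) (neg_nonpos.2 hα)

theorem abs_sub_rpow_neg_mul_le {B : ℝ} (hα : 0 ≤ α) (hB : 2 ≤ B) (hv : 0 < v) :
    |B - v| ^ (-α) * (v ^ (-α) - (1 + v) ^ (-α))
      ≤ (v ^ (-α) - (1 + v) ^ (-α)) + (Ioo (-1) 1).indicator (fun u => |u| ^ (-α)) (B - v) := by
  have hdiff : 0 ≤ v ^ (-α) - (1 + v) ^ (-α) := sub_nonneg.2 (one_add_rpow_neg_le_rpow_neg hα hv)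
  by_cases hnear : B - v ∈ Ioo (-1) 1
  · have hv1 : 1 ≤ v := by linarith [hnear.2]
    have hdiff_le : v ^ (-α) - (1 + v) ^ (-α) ≤ 1 := by
      have := rpow_le_one_of_one_le_of_nonpos hv1 (neg_nonpos.2 hα)
      have := rpow_nonneg (by linarith : (0:ℝ) ≤ 1 + v) (-α)
      linarith
    rw [indicator_of_mem hnear]
    exact le_add_of_nonneg_of_le hdiff
      (mul_le_of_le_one_right (rpow_nonneg (abs_nonneg _) _) hdiff_le)
  · have hfar : 1 ≤ |B - v| := by
      rw [mem_Ioo, ← abs_lt] at hnear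
      exact not_lt.1 hnear
    rw [indicator_of_notMem hnear, add_zero]
    exact mul_le_of_le_one_left hdiff (rpow_le_one_of_one_le_of_nonpos hfar (neg_nonpos.2 hα))

end

theorem stmt_11 (α : ℝ) (hα : α ∈ Set.Ioo (0:ℝ) (1/2)) :
    ∃ M : ℝ, ∀ A : ℝ, 0 ≤ A → ∀ B : ℝ, 2 ≤ B →
      (∫ v in (0:ℝ)..A, |B - v| ^ (-α) * (v ^ (-α) - (1 + v) ^ (-α))) ≤ M := by
  obtain ⟨hα0, hα1⟩ := hα
  have hr : -1 < -α := by linarith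
  set φ : ℝ → ℝ := (Ioo (-1) 1).indicator (fun u => |u| ^ (-α))
  have hφ_nonneg : ∀ u, 0 ≤ φ u := indicator_nonneg fun u _ => rpow_nonneg (abs_nonneg u) _
  have hφ : Integrable φ := (integrable_indicator_iff measurableSet_Ioo).2 <|
    (intervalIntegrable_abs_rpow hr (-1) 1).1.mono_set Ioo_subset_Ioc_self
  refine ⟨1 / (-α + 1) + ∫ u, φ u, fun A hA B hB => ?_⟩
  have hh : IntegrableOn (fun v : ℝ => v ^ (-α) - (1 + v) ^ (-α)) (Ioc 0 A) :=
    ((intervalIntegral.intervalIntegrable_rpow' hr).sub (intervalIntegrable_one_add_rpow hr 0 A)).1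
  calc (∫ v in (0:ℝ)..A, |B - v| ^ (-α) * (v ^ (-α) - (1 + v) ^ (-α)))
      ≤ ∫ v in Ioc 0 A, ((v ^ (-α) - (1 + v) ^ (-α)) + φ (B - v)) := by
        rw [intervalIntegral.integral_of_le hA]
        refine integral_mono_of_nonneg ?_ (hh.add (hφ.comp_sub_left B).integrableOn) ?_
          <;> refine (ae_restrict_iff' measurableSet_Ioc).2 (.of_forall fun v hv => ?_)
        · exact mul_nonneg (rpow_nonneg (abs_nonneg _) _)
            (sub_nonneg.2 (one_add_rpow_neg_le_rpow_neg hα0.le hv.1))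
        · exact abs_sub_rpow_neg_mul_le hα0.le hB hv.1
    _ = (∫ v in (0:ℝ)..A, (v ^ (-α) - (1 + v) ^ (-α))) + ∫ v in Ioc 0 A, φ (B - v) := by
        rw [integral_add hh (hφ.comp_sub_left B).integrableOn, intervalIntegral.integral_of_le hA]
    _ ≤ 1 / (-α + 1) + ∫ v, φ (B - v) :=
        add_le_add (integral_rpow_sub_one_add_rpow_le hr hA)
          (setIntegral_le_integral (hφ.comp_sub_left B) (.of_forall fun v => hφ_nonneg (B - v)))
    _ = 1 / (-α + 1) + ∫ u, φ u := by rw [integral_sub_left_eq_self]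
end
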